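/- For every integer m ≥ 0 and real θ with sin θ ≠ 0, ∑_{j=0}^m (-1)^j C(m+j, 2j) (2 cos θ)^{2j} = T_{2m+1}(sin θ) / sin θ, where T_k is the Chebyshev polynomial of the first kind. -/

import Mathlib

/-!
Both sides satisfy the same second-order linear recurrence in `m`. Writing `y = (2 cos θ)²`, the
sums `S_m(y) = ∑ⱼ (-1)ʲ C(m+j, 2j) yʲ` satisfy `S_{m+2} = (2 - y) S_{m+1} - S_m` by a Pascal-type
identity for the coefficients, while `T_{n+4} = (4X² - 2) T_{n+2} - T_n` from `2 T_2 T_{n+2} =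
T_{n+4} + T_n`. Since `2 - y = 4 sin² θ - 2`, the sequences `sin θ · S_m(y)` and `T_{2m+1}(sin θ)`
agree for all `m` once they agree for `m = 0, 1`; the identity `s · S_m(4 - 4s²) = T_{2m+1}(s)`
is in fact polynomial and holds in every commutative ring.
-/

open Real Finset Polynomial

theorem Nat.choose_add_two_add_choose (n k : ℕ) :
    (n + 2).choose (k + 2) + n.choose (k + 2) = 2 * (n + 1).choose (k + 2) + n.choose k := by
  rw [Nat.choose_succ_succ (n + 1), Nat.choose_succ_succ n k, Nat.choose_succ_succ n (k + 1)]
  ring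

theorem Polynomial.Chebyshev.T_add_four (R : Type*) [CommRing R] (n : ℤ) :
    T R (n + 4) = (4 * X ^ 2 - 2) * T R (n + 2) - T R n := by
  have h := T_mul_T R (n + 2) 2
  rw [T_two, add_assoc, show (2 : ℤ) + 2 = 4 by norm_num, add_sub_cancel_right] at h
  linear_combination -h

section AlternatingChooseSum

variable {R : Type*} [CommRing R]

def alternatingChooseSum (m : ℕ) (y : R) : R :=
  ∑ j ∈ range (m + 1), (-1) ^ j * ((m + j).choose (2 * j) : R) * y ^ j

@[simp]
theorem alternatingChooseSum_zero (y : R) : alternatingChooseSum 0 y = 1 := by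
  simp [alternatingChooseSum]

theorem alternatingChooseSum_one (y : R) : alternatingChooseSum 1 y = 1 - y := by
  simp [alternatingChooseSum, sum_range_succ, sub_eq_add_neg]

theorem alternatingChooseSum_eq_sum_range {m N : ℕ} (hN : m + 1 ≤ N) (y : R) :
    alternatingChooseSum m y = ∑ j ∈ range N, (-1) ^ j * ((m + j).choose (2 * j) : R) * y ^ j := by
  refine sum_subset (range_subset_range.2 hN) fun j _ hj => ?_
  rw [Nat.choose_eq_zero_of_lt (by simp at hj; omega)]
  simp

theorem alternatingChooseSum_add_two (m : ℕ) (y : R) :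
    alternatingChooseSum (m + 2) y =
      (2 - y) * alternatingChooseSum (m + 1) y - alternatingChooseSum m y := by
  have hcoeff (k : ℕ) : ((m + 2 + (k + 1)).choose (2 * (k + 1)) : R) =
      2 * (m + 1 + (k + 1)).choose (2 * (k + 1)) + (m + 1 + k).choose (2 * k)
        - (m + (k + 1)).choose (2 * (k + 1)) := by
    have := Nat.choose_add_two_add_choose (m + k + 1) (2 * k)
    rw [eq_sub_iff_add_eq]
    convert congrArg (Nat.cast : ℕ → R) this using 1 <;> push_cast <;> ring_nf
  -- Pad the three sums to a common length and split off the constant term `1`.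
  have hshift (n : ℕ) (hn : n ≤ m + 2) : alternatingChooseSum n y = ∑ k ∈ range (m + 2),
      (-1) ^ (k + 1) * ((n + (k + 1)).choose (2 * (k + 1)) : R) * y ^ (k + 1) + 1 := by
    rw [alternatingChooseSum_eq_sum_range (N := m + 3) (by omega), sum_range_succ']
    simp
  have hmul : y * alternatingChooseSum (m + 1) y = ∑ k ∈ range (m + 2),
      y * ((-1) ^ k * ((m + 1 + k).choose (2 * k) : R) * y ^ k) := by
    rw [alternatingChooseSum, mul_sum]
  have hterms : ∑ k ∈ range (m + 2),
      (-1) ^ (k + 1) * ((m + 2 + (k + 1)).choose (2 * (k + 1)) : R) * y ^ (k + 1) =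
      ∑ k ∈ range (m + 2),
        (2 * ((-1) ^ (k + 1) * ((m + 1 + (k + 1)).choose (2 * (k + 1)) : R) * y ^ (k + 1))
          - y * ((-1) ^ k * ((m + 1 + k).choose (2 * k) : R) * y ^ k)
          - (-1) ^ (k + 1) * ((m + (k + 1)).choose (2 * (k + 1)) : R) * y ^ (k + 1)) :=
    sum_congr rfl fun k _ => by rw [hcoeff k]; ring
  rw [sum_sub_distrib, sum_sub_distrib, ← mul_sum, ← hmul] at hterms
  rw [hshift (m + 2) le_rfl, hterms, hshift (m + 1) (by omega), hshift m (by omega)]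
  ring

theorem mul_alternatingChooseSum_eq_T_eval (m : ℕ) (s : R) :
    s * alternatingChooseSum m (4 - 4 * s ^ 2) = (Chebyshev.T R (2 * m + 1)).eval s := by
  induction m using Nat.twoStepInduction with
  | zero => simp
  | one =>
    have hT3 : Chebyshev.T R 3 = 2 * X * (2 * X ^ 2 - 1) - X := by
      simpa [Chebyshev.T_two] using Chebyshev.T_add_two R 1
    rw [alternatingChooseSum_one, show 2 * ((1 : ℕ) : ℤ) + 1 = 3 by norm_num, hT3]
    simp only [eval_sub, eval_mul, eval_pow, eval_X, eval_ofNat, eval_one]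
    ring
  | more m ih₀ ih₁ =>
    rw [alternatingChooseSum_add_two, mul_sub, mul_left_comm, ih₁, ih₀,
      show 2 * ((m + 2 : ℕ) : ℤ) + 1 = 2 * m + 1 + 4 by push_cast; ring,
      show 2 * ((m + 1 : ℕ) : ℤ) + 1 = 2 * m + 1 + 2 by push_cast; ring, Chebyshev.T_add_four]
    simp only [eval_sub, eval_mul, eval_pow, eval_X, eval_ofNat]
    ring

end AlternatingChooseSum

theorem stmt_14 (m : ℕ) (θ : ℝ) (h : Real.sin θ ≠ 0) :
    ∑ j ∈ Finset.range (m + 1), (-1 : ℝ) ^ j * (Nat.choose (m + j) (2 * j)) *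
        (2 * Real.cos θ) ^ (2 * j)
      = (Polynomial.Chebyshev.T ℝ (2 * m + 1)).eval (Real.sin θ) / Real.sin θ := by
  have hcos : (2 * cos θ) ^ 2 = 4 - 4 * sin θ ^ 2 := by
    linear_combination 4 * cos_sq_add_sin_sq θ
  rw [eq_div_iff h, mul_comm, ← mul_alternatingChooseSum_eq_T_eval, alternatingChooseSum]
  simp only [pow_mul, hcos]
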